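/- arXiv:1710.06556 — 2 statements merged into one kernel-verified Lean document; each statement's English description precedes it below -/
import Mathlib

section
/- (Coefficientwise formulation of Proposition 1.2 of the paper.) For every integer n ≥ 1, every m with 1 ≤ m ≤ n, every m-element subset I of {1,…,n}, and all non-negative integers f_1,…,f_m, the identity L_n^{p^{f_m}} · [f_1,…,f_{m−1}, f_m + n]_I = Σ_{s=0}^{n−1} (−1)^{n+s−1} · [f_1,…,f_{m−1}, f_m + s]_I · L_{n,s}^{p^{f_m}} holds in R = 𝔽_p[y_1,…,y_n]. Here the brackets on subsets I are m×m determinants in the variables y_i with i ∈ I, while L_n and L_{n,s} involve all n variables. (Comparing coefficients of the exterior monomials x_I, this family of identities, taken over all subsets I of size m = n−k, is equivalent to Proposition 1.2 for the Mùi brackets [k; e_{k+1},…,e_n].) -/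
/-- The bracket `[e_1,…,e_m]_I`: the determinant `det (y_{ι a} ^ (p ^ e b))` in
`𝔽_p[y_1,…,y_n]`, where `ι : Fin m → Fin n` enumerates the subset `I`. -/
noncomputable def bracket (p n m : ℕ) (e : Fin m → ℕ) (ι : Fin m → Fin n) :
    MvPolynomial (Fin n) (ZMod p) :=
  Matrix.det (Matrix.of fun a b : Fin m =>
    (MvPolynomial.X (ι a) : MvPolynomial (Fin n) (ZMod p)) ^ p ^ e b)

/-- `Lpoly p n s = L_{n,s} = [0,1,…,ŝ,…,n]` (for `s < n`); `Lpoly p n n = L_n = [0,…,n-1]`. -/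
noncomputable def Lpoly (p n s : ℕ) : MvPolynomial (Fin n) (ZMod p) :=
  bracket p n n (fun j => if (j : ℕ) < s then (j : ℕ) else (j : ℕ) + 1) id

/-!
Bordering the `n × (n+1)` matrix `(y_a ^ p ^ b)` with one of its own rows
`(y_i ^ p ^ b)_b` gives a square matrix with a repeated row, so its Laplace expansion along
that row vanishes: `y_i ^ p ^ n · L_n = ∑_{s<n} ± y_i ^ p ^ s · L_{n,s}`. Applying the
Frobenius endomorphism `x ↦ x ^ p ^ f` turns this into a linear relation between the
columns `(y_{i_a} ^ p ^ (f + s))_a`, `s ≤ n`, and substituting it into the last column of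
`[f_1, …, f_m + n]_I` gives the identity by multilinearity of the determinant.
-/

namespace Matrix

variable {R : Type*} [CommRing R]

theorem sum_neg_one_pow_mul_det_submatrix_succAbove_eq_zero {n : ℕ}
    (A : Matrix (Fin n) (Fin (n + 1)) R) (i : Fin n) :
    ∑ j : Fin (n + 1), (-1) ^ (j : ℕ) * A i j * (A.submatrix id j.succAbove).det = 0 := by
  have hB : (A.submatrix (Fin.lastCases i id) id).det = 0 :=
    det_zero_of_row_eq (Fin.castSucc_lt_last i).ne (by ext; simp)
  rw [det_succ_row _ (Fin.last n)] at hB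
  have hminor : (fun c => Fin.lastCases i id c : Fin (n + 1) → Fin n) ∘ Fin.castSucc = id := by
    ext; simp
  simpa [Fin.succAbove_last, pow_add, mul_assoc, ← Finset.mul_sum, hminor] using hB

theorem det_updateCol_finset_sum {m ι : Type*} [DecidableEq m] [Fintype m]
    (A : Matrix m m R) (j : m) (S : Finset ι) (v : ι → m → R) :
    (A.updateCol j (∑ s ∈ S, v s)).det = ∑ s ∈ S, (A.updateCol j (v s)).det := by
  simp only [← det_transpose (A.updateCol j _), ← updateRow_transpose]
  exact (detRowAlternating (R := R)).map_update_sum S j v Aᵀ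

end Matrix

open MvPolynomial Matrix Finset

theorem Lpoly_eq_det_submatrix_succAbove (p n : ℕ) (s : Fin (n + 1)) :
    Lpoly p n s = ((of fun (a : Fin n) (b : Fin (n + 1)) =>
      (X a : MvPolynomial (Fin n) (ZMod p)) ^ p ^ (b : ℕ)).submatrix id s.succAbove).det := by
  refine congrArg det (Matrix.ext fun a b => ?_)
  simp only [of_apply, submatrix_apply, id]
  by_cases h : (b : ℕ) < s
  · rw [if_pos h, Fin.succAbove_of_castSucc_lt _ _ h, Fin.val_castSucc]
  · rw [if_neg h, Fin.succAbove_of_le_castSucc _ _ (not_lt.1 h), Fin.val_succ]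

theorem Lpoly_mul_X_pow (p n : ℕ) (i : Fin n) :
    Lpoly p n n * X i ^ p ^ n =
      ∑ s ∈ range n, (-1) ^ (n + s + 1) * Lpoly p n s * X i ^ p ^ s := by
  have h := sum_neg_one_pow_mul_det_submatrix_succAbove_eq_zero
    (of fun (a : Fin n) (b : Fin (n + 1)) =>
      (X a : MvPolynomial (Fin n) (ZMod p)) ^ p ^ (b : ℕ)) i
  simp only [← Lpoly_eq_det_submatrix_succAbove, Fin.sum_univ_castSucc, of_apply,
    Fin.val_castSucc, Fin.val_last] at h
  rw [Fin.sum_univ_eq_sum_range (fun s => (-1) ^ s * X i ^ p ^ s * Lpoly p n s)] at h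
  have hsq : ((-1 : MvPolynomial (Fin n) (ZMod p)) ^ n) ^ 2 = 1 := by
    rw [← pow_mul, mul_comm, pow_mul, neg_one_sq, one_pow]
  calc Lpoly p n n * X i ^ p ^ n
      = -(-1) ^ n * ∑ s ∈ range n, (-1) ^ s * X i ^ p ^ s * Lpoly p n s := by
        linear_combination (-1) ^ n * h - Lpoly p n n * X i ^ p ^ n * hsq
    _ = _ := by
        rw [mul_sum]
        exact sum_congr rfl fun s _ => by ring

theorem Lpoly_pow_mul_X_pow (p n : ℕ) [Fact p.Prime] (f : ℕ) (i : Fin n) :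
    Lpoly p n n ^ p ^ f * X i ^ p ^ (f + n) =
      ∑ s ∈ range n, (-1) ^ (n + s + 1) * Lpoly p n s ^ p ^ f * X i ^ p ^ (f + s) := by
  have h := congrArg (iterateFrobenius (MvPolynomial (Fin n) (ZMod p)) p f) (Lpoly_mul_X_pow p n i)
  simp only [map_sum, map_mul, map_pow, map_neg, map_one, iterateFrobenius_def] at h
  convert h using 2
  · rw [← pow_mul, ← pow_add, add_comm]
  · refine sum_congr rfl fun s _ => ?_
    rw [← pow_mul, ← pow_add, add_comm f]

theorem bracket_update_eq_det_updateCol (p n m : ℕ) (e : Fin m → ℕ) (ι : Fin m → Fin n)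
    (j : Fin m) (k : ℕ) :
    bracket p n m (Function.update e j k) ι =
      ((of fun a b => (X (ι a) : MvPolynomial (Fin n) (ZMod p)) ^ p ^ e b).updateCol j
        fun a => X (ι a) ^ p ^ k).det := by
  refine congrArg det (Matrix.ext fun a b => ?_)
  rcases eq_or_ne b j with rfl | hb
  · simp
  · simp [hb]

theorem Lpoly_pow_mul_bracket_update (p n m : ℕ) [Fact p.Prime] (e : Fin m → ℕ)
    (ι : Fin m → Fin n) (j : Fin m) :
    Lpoly p n n ^ p ^ e j * bracket p n m (Function.update e j (e j + n)) ι =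
      ∑ s ∈ range n, (-1) ^ (n + s + 1) *
        bracket p n m (Function.update e j (e j + s)) ι * Lpoly p n s ^ p ^ e j := by
  have hcol : Lpoly p n n ^ p ^ e j •
        (fun a => (X (ι a) : MvPolynomial (Fin n) (ZMod p)) ^ p ^ (e j + n)) =
      ∑ s ∈ range n,
        ((-1) ^ (n + s + 1) * Lpoly p n s ^ p ^ e j) • fun a => X (ι a) ^ p ^ (e j + s) := by
    funext a
    simp only [Pi.smul_apply, smul_eq_mul, Finset.sum_apply, Lpoly_pow_mul_X_pow]
  rw [bracket_update_eq_det_updateCol, ← det_updateCol_smul, hcol, det_updateCol_finset_sum]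
  refine sum_congr rfl fun s _ => ?_
  rw [det_updateCol_smul, ← bracket_update_eq_det_updateCol]
  ring

/-- Coefficientwise formulation of Proposition 1.2: for every `m`-element subset `I`
of `{1,…,n}` (given as a `Finset` of cardinality `m`, enumerated in increasing order
by `Finset.orderIsoOfFin`) and all non-negative integers `f_1,…,f_m`,
`L_n^{p^{f_m}} · [f_1,…,f_{m−1}, f_m + n]_I
  = Σ_{s=0}^{n−1} (−1)^{n+s−1} · [f_1,…,f_{m−1}, f_m + s]_I · L_{n,s}^{p^{f_m}}`. -/
theorem statement3 (p : ℕ) (hp : p.Prime) (n m : ℕ)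
    (hm : 1 ≤ m) (I : Finset (Fin n)) (hI : I.card = m)
    (f : Fin m → ℕ) :
    Lpoly p n n ^ p ^ f ⟨m - 1, by omega⟩ *
        bracket p n m (Function.update f ⟨m - 1, by omega⟩ (f ⟨m - 1, by omega⟩ + n))
          (fun b => ((I.orderIsoOfFin hI) b : Fin n)) =
      ∑ s ∈ Finset.range n,
        (-1 : MvPolynomial (Fin n) (ZMod p)) ^ (n + s - 1) *
          bracket p n m (Function.update f ⟨m - 1, by omega⟩ (f ⟨m - 1, by omega⟩ + s))
            (fun b => ((I.orderIsoOfFin hI) b : Fin n)) *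
          Lpoly p n s ^ p ^ f ⟨m - 1, by omega⟩ := by
  have : Fact p.Prime := ⟨hp⟩
  rw [Lpoly_pow_mul_bracket_update]
  refine sum_congr rfl fun s hs => ?_
  obtain ⟨k, hk⟩ : ∃ k, n + s = k + 1 := ⟨n + s - 1, by have := mem_range.1 hs; omega⟩
  rw [hk, Nat.add_sub_cancel, pow_succ, pow_succ]
  ring
end

section
/- (The invariant-theoretic identity established in the proof of Theorem 1.3 of the paper, cleared of denominators.) Let 0 ≤ k ≤ n−1 and let 0 ≤ t_1 < t_2 < … < t_{k+1} ≤ n−1 be integers. Let f_1 < … < f_{n−k} be the increasing enumeration of {0,1,…,n} ∖ {t_1,…,t_{k+1}}. Then the identity L_n · [k; f_1,…,f_{n−k}] = Σ_{i=1}^{k+1} (−1)^{k+1−i} · M_{n, t_1,…,t̂_i,…,t_{k+1}} · L_{n,t_i} holds in the exterior algebra A over R, where t̂_i means that t_i is omitted from the list t_1,…,t_{k+1}. (Dividing by L_n, this is the identity [k; 0,…,t̂_1,…,t̂_{k+1},…,n] = Σ_{i=1}^{k+1} (−1)^{k+1−i} M_{n,t_1,…,t̂_i,…,t_{k+1}}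 Q_{n,t_i} used to compute P^t M_{n,s_1,…,s_k}.) -/
set_option synthInstance.maxHeartbeats 1000000
set_option maxHeartbeats 1000000

/-- The exterior algebra `A` over `R = 𝔽_p[y_1,…,y_n]` on the free module `R^n`. -/
noncomputable abbrev ExtAlg (p n : ℕ) :=
  ExteriorAlgebra (MvPolynomial (Fin n) (ZMod p)) (Fin n → MvPolynomial (Fin n) (ZMod p))

/-- The generator `x_i` of the exterior algebra. -/
noncomputable def xgen (p n : ℕ) (i : Fin n) : ExtAlg p n :=
  ExteriorAlgebra.ι (MvPolynomial (Fin n) (ZMod p)) (Pi.single i 1)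

/-- The Mùi bracket `[k; e_{k+1},…,e_n] = Σ_I sign(σ_I) · x_I · [e_{k+1},…,e_n]_{I'}`,
the sum running over all `k`-element subsets `I` of `{1,…,n}` with complement `I'`;
`σ_I` is the permutation sending `(1,…,n)` to `(i_1,…,i_k,i_{k+1},…,i_n)` where
`I = {i_1 < … < i_k}` and `I' = {i_{k+1} < … < i_n}`. -/
noncomputable def muiBracket (p n k : ℕ) (e : Fin (n - k) → ℕ) : ExtAlg p n :=
  ∑ I : Finset (Fin n),
    if hI : I.card = k then
      have hk : k ≤ n := by
        have h1 := Finset.card_le_univ I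
        rw [hI, Fintype.card_fin] at h1
        exact h1
      have hIc : Iᶜ.card = n - k := by
        simp [Finset.card_compl, hI]
      ((Equiv.Perm.sign
        ((finCongr (Nat.add_sub_cancel' hk).symm).trans
          (finSumFinEquiv.symm.trans
            ((Equiv.sumCongr (I.orderIsoOfFin hI).toEquiv
              ((Iᶜ.orderIsoOfFin hIc).toEquiv.trans
                (Equiv.subtypeEquivRight fun x => Finset.mem_compl))).trans
              (Equiv.sumCompl (· ∈ I)))))) : ℤ) •
      ((List.ofFn fun a : Fin k => xgen p n ((I.orderIsoOfFin hI) a)).prod *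
        algebraMap (MvPolynomial (Fin n) (ZMod p)) (ExtAlg p n)
          (bracket p n (n - k) e fun b => ((Iᶜ.orderIsoOfFin hIc) b : Fin n)))
    else 0

/-! Expanding a determinant with a repeated row gives the vector identity
`∑ⱼ (-1)^j L_{n,j} (y_r^{p^j})_r = 0`, `j = 0, …, n`. A bracket `[j, W]_I` is linear in its
first column, so `∑ⱼ (-1)^j [j, W]_I L_{n,j} = 0` for any exponents `W`. Take for `W` the
increasing enumeration of `{0,…,n-1} ∖ {t_1,…,t_{k+1}}`: all terms with `j ∈ W` vanish, and
sorting the exponents of the remaining ones (`j = n` and `j = t_i`) turns them into `[f]_I`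
and `[g^{(i)}]_I`, with signs `(-1)^{n-k-1}` and `(-1)^{t_i-i}`. The resulting identity between
brackets holds for every `I`, i.e. coefficientwise in the `x_I`, so it lifts to Mùi brackets. -/

open MvPolynomial Finset

theorem Fin.val_succAbove_eq_ite {m : ℕ} (j : Fin (m + 1)) (b : Fin m) :
    (j.succAbove b : ℕ) = if (b : ℕ) < j then (b : ℕ) else b + 1 := by
  rcases lt_or_ge (b : ℕ) j with h | h
  · simp [Fin.succAbove_of_castSucc_lt _ _ (Fin.lt_def.mpr h), h]
  · simp [Fin.succAbove_of_le_castSucc _ _ (Fin.le_def.mpr h), Nat.not_lt.mpr h]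

theorem Fin.image_univ_eq_insert_image_succAbove {α : Type*} [DecidableEq α] {m : ℕ}
    (u : Fin (m + 1) → α) (q : Fin (m + 1)) :
    univ.image u = insert (u q) (univ.image (u ∘ q.succAbove)) := by
  rw [← image_image, Fin.image_succAbove_univ, ← image_insert, insert_compl_self]

section SortedSequences

variable {m : ℕ}

theorem StrictMono.eq_of_image_univ_eq {u v : Fin m → ℕ} (hu : StrictMono u)
    (hv : StrictMono v) (h : univ.image u = univ.image v) : u = v := by
  rw [← hu.range_inj hv, ← Set.image_univ, ← Set.image_univ, ← coe_univ, ← coe_image,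
    ← coe_image, h]

theorem StrictMono.card_filter_image_lt {u : Fin m → ℕ} (hu : StrictMono u) (q : Fin m) :
    #((univ.image u).filter (· < u q)) = q := by
  rw [filter_image, card_image_of_injective _ hu.injective, ← Fin.card_Iio]
  congr 1
  ext b
  simp [hu.lt_iff_lt]

theorem StrictMono.card_filter_range_sdiff_image_lt_add {n : ℕ} {t : Fin m → ℕ}
    (ht : StrictMono t) {i : Fin m} (hti : t i ≤ n) :
    #((range n \ univ.image t).filter (· < t i)) + i = t i := by
  have hbelow : (range n \ univ.image t).filter (· < t i) = range (t i) \ univ.image t := by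
    ext y
    simp only [mem_filter, mem_sdiff, mem_range]
    exact ⟨fun ⟨⟨_, hy⟩, hlt⟩ => ⟨hlt, hy⟩, fun ⟨hlt, hy⟩ => ⟨⟨hlt.trans_le hti, hy⟩, hlt⟩⟩
  have hinter : range (t i) ∩ univ.image t = (univ.image t).filter (· < t i) := by
    ext y
    simp only [mem_inter, mem_filter, mem_range, and_comm]
  rw [hbelow, ← ht.card_filter_image_lt i, ← hinter, card_sdiff_add_card_inter, card_range]

theorem range_sdiff_image_succAbove {n : ℕ} {t : Fin (m + 1) → ℕ} (ht : Function.Injective t)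
    {i : Fin (m + 1)} (hti : t i < n) :
    range n \ univ.image (fun j => t (i.succAbove j)) = insert (t i) (range n \ univ.image t) := by
  have hmem : t i ∈ range n \ univ.image fun j => t (i.succAbove j) := by
    simpa using ⟨hti, fun j => ht.ne (i.succAbove_ne j)⟩
  have hT := Fin.image_univ_eq_insert_image_succAbove t i
  rw [Function.comp_def] at hT
  rw [hT, sdiff_insert, insert_erase hmem]

end SortedSequences

section Determinants

variable {R : Type*} [CommRing R]

theorem Matrix.sum_neg_one_pow_mul_mul_det_submatrix_succAbove {n : ℕ}
    (A : Matrix (Fin n) (Fin (n + 1)) R) (r : Fin n) :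
    ∑ j : Fin (n + 1), (-1) ^ (j : ℕ) * A r j * (A.submatrix id j.succAbove).det = 0 := by
  -- expand, along its top row, the matrix obtained from `A` by repeating row `r` on top
  have h := Matrix.det_succ_row_zero
    (Matrix.of (Fin.cons (A r) fun i => A i : Fin (n + 1) → Fin (n + 1) → R))
  rw [Matrix.det_zero_of_row_eq (Fin.succ_ne_zero r).symm (by ext; simp)] at h
  simpa [Matrix.submatrix] using h.symm

theorem Matrix.sum_mul_det_of_cons_eq_zero {ι : Type*} {m : ℕ} (s : Finset ι) (c : ι → R)
    (v : ι → Fin (m + 1) → R) (B : Matrix (Fin (m + 1)) (Fin m) R)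
    (hv : ∀ a, ∑ j ∈ s, c j * v j a = 0) :
    ∑ j ∈ s, c j * (Matrix.of fun a => Fin.cons (v j a) (B a)).det = 0 := by
  have hexp : ∀ w : Fin (m + 1) → R, (Matrix.of fun a => Fin.cons (w a) (B a)).det =
      ∑ a, w a * ((-1) ^ (a : ℕ) * (B.submatrix a.succAbove id).det) := by
    intro w
    rw [Matrix.det_succ_column_zero]
    exact sum_congr rfl fun a _ => by simp [Matrix.submatrix]; ring
  simp only [hexp, mul_sum]
  rw [sum_comm]
  refine sum_eq_zero fun a _ => ?_
  simp only [← mul_assoc, ← sum_mul, hv, zero_mul]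

end Determinants

section Brackets

variable {p n : ℕ}

theorem bracket_comp_perm {m : ℕ} (e : Fin m → ℕ) (ι : Fin m → Fin n) (σ : Equiv.Perm (Fin m)) :
    bracket p n m (e ∘ σ) ι = (Equiv.Perm.sign σ : ℤ) * bracket p n m e ι :=
  Matrix.det_permute' σ (Matrix.of fun a b => (X (ι a) : MvPolynomial (Fin n) (ZMod p)) ^ p ^ e b)

theorem bracket_eq_zero_of_eq {m : ℕ} {e : Fin m → ℕ} {b b' : Fin m} (hne : b ≠ b')
    (he : e b = e b') (ι : Fin m → Fin n) : bracket p n m e ι = 0 :=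
  Matrix.det_zero_of_column_eq hne fun a => by simp [he]

theorem bracket_insertNth {m : ℕ} (q : Fin (m + 1)) (x : ℕ) (W : Fin m → ℕ)
    (ι : Fin (m + 1) → Fin n) :
    bracket p n (m + 1) (q.insertNth x W) ι =
      (-1) ^ (q : ℕ) * bracket p n (m + 1) (Fin.cons x W) ι := by
  rw [← Fin.cons_comp_cycleRange, bracket_comp_perm, Fin.sign_cycleRange]
  push_cast
  rfl

/-- Sorting the exponents `x, W₀, …` into increasing order moves `x` past the exponents of `W`
smaller than it. -/
theorem bracket_eq_neg_one_pow_mul_bracket_cons {m : ℕ} {u : Fin (m + 1) → ℕ} {W : Fin m → ℕ}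
    (hu : StrictMono u) (hW : StrictMono W) {x : ℕ} (hx : x ∉ univ.image W)
    (hux : univ.image u = insert x (univ.image W)) (ι : Fin (m + 1) → Fin n) :
    bracket p n (m + 1) u ι =
      (-1) ^ #((univ.image W).filter (· < x)) * bracket p n (m + 1) (Fin.cons x W) ι := by
  obtain ⟨q, -, rfl⟩ := mem_image.mp (hux ▸ mem_insert_self x _)
  have hWu : univ.image W = (univ.image u).erase (u q) := by rw [hux, erase_insert hx]
  have hremove : q.removeNth u = W := by
    refine (hu.comp (Fin.strictMono_succAbove q)).eq_of_image_univ_eq hW ?_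
    rw [hWu, Fin.image_univ_eq_insert_image_succAbove u q, erase_insert]
    simpa using fun b => hu.injective.ne (q.succAbove_ne b)
  have hcount : #((univ.image W).filter (· < u q)) = q := by
    rw [hWu, filter_erase, erase_eq_of_notMem (by simp), hu.card_filter_image_lt]
  rw [hcount, ← hremove, ← bracket_insertNth, Fin.insertNth_self_removeNth]

theorem Lpoly_eq_det_submatrix (j : Fin (n + 1)) :
    Lpoly p n j = ((Matrix.of fun (r : Fin n) (c : Fin (n + 1)) =>
      (X r : MvPolynomial (Fin n) (ZMod p)) ^ p ^ (c : ℕ)).submatrix id j.succAbove).det := by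
  unfold Lpoly bracket
  congr 1
  ext a b
  simp [Fin.val_succAbove_eq_ite]

theorem sum_neg_one_pow_mul_bracket_cons_mul_Lpoly {m : ℕ} (W : Fin m → ℕ)
    (ι : Fin (m + 1) → Fin n) :
    ∑ j ∈ range (n + 1), (-1) ^ j * bracket p n (m + 1) (Fin.cons j W) ι * Lpoly p n j = 0 := by
  set A : Matrix (Fin n) (Fin (n + 1)) (MvPolynomial (Fin n) (ZMod p)) :=
    Matrix.of fun r c => X r ^ p ^ (c : ℕ)
  have hcol : ∀ a, ∑ j : Fin (n + 1), (-1) ^ (j : ℕ) * Lpoly p n j * A (ι a) j = 0 := fun a => by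
    simp_rw [Lpoly_eq_det_submatrix, mul_right_comm _ _ (A (ι a) _)]
    exact A.sum_neg_one_pow_mul_mul_det_submatrix_succAbove (ι a)
  rw [← Fin.sum_univ_eq_sum_range]
  convert Matrix.sum_mul_det_of_cons_eq_zero _ _ (fun j a => A (ι a) j)
    (Matrix.of fun a b => X (ι a) ^ p ^ W b) hcol using 2 with j
  rw [mul_right_comm]
  congr 2
  unfold bracket
  congr 1
  ext a b
  cases b using Fin.cases <;> simp [A]

theorem neg_one_pow_mul_bracket_cons_mul_Lpoly_add_sum_eq_zero {k m : ℕ}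
    {t : Fin (k + 1) → ℕ} (ht : Function.Injective t) (htn : ∀ i, t i < n) {W : Fin m → ℕ}
    (hW : univ.image W = range n \ univ.image t) (ι : Fin (m + 1) → Fin n) :
    (-1) ^ n * bracket p n (m + 1) (Fin.cons n W) ι * Lpoly p n n +
      ∑ i, (-1) ^ t i * bracket p n (m + 1) (Fin.cons (t i) W) ι * Lpoly p n (t i) = 0 := by
  have htn' : n ∉ univ.image t := by simpa using fun i => (htn i).ne
  have hsub : insert n (univ.image t) ⊆ range (n + 1) :=
    insert_subset (self_mem_range_succ n) <| by
      simpa [subset_iff] using fun i => (htn i).trans n.lt_succ_self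
  let F : ℕ → MvPolynomial (Fin n) (ZMod p) := fun j =>
    (-1) ^ j * bracket p n (m + 1) (Fin.cons j W) ι * Lpoly p n j
  change F n + ∑ i, F (t i) = 0
  rw [← sum_image ht.injOn, ← sum_insert htn', sum_subset hsub]
  · exact sum_neg_one_pow_mul_bracket_cons_mul_Lpoly W ι
  · intro j hj hjt
    have hjW : j ∈ univ.image W := by
      simp only [mem_range, mem_insert, not_or] at hj hjt
      rw [hW, mem_sdiff, mem_range]
      exact ⟨by omega, hjt.2⟩
    obtain ⟨b, -, hb⟩ := mem_image.mp hjW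
    simp only [F]
    rw [bracket_eq_zero_of_eq (b := 0) (b' := b.succ) (Fin.succ_ne_zero b).symm (by simp [hb]) ι]
    ring

theorem bracket_mul_Lpoly_eq_sum {k N : ℕ} (hN : 0 < N) (hkN : k + N = n)
    {t : Fin (k + 1) → ℕ} (ht : StrictMono t) (htn : ∀ i, t i < n)
    {f : Fin N → ℕ} (hf : StrictMono f)
    (hfim : univ.image f = range (n + 1) \ univ.image t)
    {g : Fin (k + 1) → Fin N → ℕ} (hg : ∀ i, StrictMono (g i))
    (hgim : ∀ i, univ.image (g i) = range n \ univ.image (fun j : Fin k => t (i.succAbove j)))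
    (ι : Fin N → Fin n) :
    bracket p n N f ι * Lpoly p n n =
      ∑ i : Fin (k + 1), (-1) ^ (k - (i : ℕ)) * bracket p n N (g i) ι * Lpoly p n (t i) := by
  obtain ⟨m, rfl⟩ := Nat.exists_eq_add_one_of_ne_zero hN.ne'
  have htn' : n ∉ univ.image t := by simpa using fun i => (htn i).ne
  have hS : #(range n \ univ.image t) = m := by
    rw [card_sdiff_of_subset (by simpa [subset_iff] using htn), card_range,
      card_image_of_injective _ ht.injective, card_univ, Fintype.card_fin]
    omega
  set W := (range n \ univ.image t).orderEmbOfFin hS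
  have hW : univ.image W = range n \ univ.image t := by
    rw [← Finset.coe_inj, coe_image, coe_univ, Set.image_univ, range_orderEmbOfFin]
  have hnW : n ∉ univ.image W := by simp [hW]
  have hf' : bracket p n (m + 1) f ι = (-1) ^ m * bracket p n (m + 1) (Fin.cons n W) ι := by
    rw [bracket_eq_neg_one_pow_mul_bracket_cons hf W.strictMono hnW, hW, filter_true_of_mem, hS]
    · exact fun x hx => mem_range.mp (mem_sdiff.mp hx).1
    · rw [hfim, hW, range_add_one, insert_sdiff_of_notMem _ htn']
  have hg' : ∀ i, ∃ q, q + i = t i ∧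
      bracket p n (m + 1) (g i) ι = (-1) ^ q * bracket p n (m + 1) (Fin.cons (t i) W) ι := by
    intro i
    have htiW : t i ∉ univ.image W := by simp [hW]
    refine ⟨_, ?_, bracket_eq_neg_one_pow_mul_bracket_cons (hg i) W.strictMono htiW ?_ ι⟩
    · rw [hW]
      exact ht.card_filter_range_sdiff_image_lt_add (htn i).le
    · rw [hgim, hW, range_sdiff_image_succAbove ht.injective (htn i)]
  choose q hq hgq using hg'
  have hsign : ∀ i : Fin (k + 1),
      (-1 : MvPolynomial (Fin n) (ZMod p)) ^ (k - (i : ℕ)) * (-1) ^ q i =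
        (-1) ^ (m + n + 1) * (-1) ^ t i := by
    intro i
    rw [← pow_add, ← pow_add, neg_one_pow_eq_pow_mod_two,
      neg_one_pow_eq_pow_mod_two (m + n + 1 + t i)]
    have := hq i
    have := i.is_lt
    congr 1
    omega
  have hrhs : ∑ i : Fin (k + 1),
      (-1) ^ (k - (i : ℕ)) * bracket p n (m + 1) (g i) ι * Lpoly p n (t i) =
      (-1) ^ (m + n + 1) *
        ∑ i, (-1) ^ t i * bracket p n (m + 1) (Fin.cons (t i) W) ι * Lpoly p n (t i) := by
    rw [mul_sum]
    refine sum_congr rfl fun i _ => ?_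
    rw [hgq, ← mul_assoc, hsign]
    ring
  have hsq : ((-1 : MvPolynomial (Fin n) (ZMod p)) ^ n) ^ 2 = 1 := by
    rw [← pow_mul, pow_mul', neg_one_sq, one_pow]
  rw [hf', hrhs]
  linear_combination (-(-1) ^ (m + n + 1)) *
      neg_one_pow_mul_bracket_cons_mul_Lpoly_add_sum_eq_zero ht.injective htn hW ι -
    (-1) ^ m * bracket p n (m + 1) (Fin.cons n W) ι * Lpoly p n n * hsq

end Brackets

theorem algebraMap_mul_muiBracket {p n k : ℕ} {ι : Type*} (s : Finset ι)
    (L : MvPolynomial (Fin n) (ZMod p)) (e : Fin (n - k) → ℕ)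
    (c L' : ι → MvPolynomial (Fin n) (ZMod p)) (e' : ι → Fin (n - k) → ℕ)
    (h : ∀ κ : Fin (n - k) → Fin n, bracket p n (n - k) e κ * L =
      ∑ i ∈ s, c i * bracket p n (n - k) (e' i) κ * L' i) :
    algebraMap _ (ExtAlg p n) L * muiBracket p n k e =
      ∑ i ∈ s, algebraMap _ (ExtAlg p n) (c i) * muiBracket p n k (e' i) *
        algebraMap _ (ExtAlg p n) (L' i) := by
  unfold muiBracket
  simp_rw [mul_sum, sum_mul]
  rw [sum_comm]
  refine sum_congr rfl fun I _ => ?_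
  split_ifs with hI
  · simp only [mul_smul_comm, smul_mul_assoc, ← smul_sum]
    congr 1
    simp only [mul_assoc, ← map_mul, ← Algebra.left_comm, ← mul_sum, ← map_sum]
    congr 2
    rw [mul_comm, h]
    exact sum_congr rfl fun i _ => by ring
  · simp

/-- `g i` enumerates `{0,…,n−1} ∖ {t_1,…,t̂_i,…,t_{k+1}}`, so `muiBracket p n k (g i)` is
`M_{n,t_1,…,t̂_i,…,t_{k+1}}`; with `i : Fin (k + 1)` counted from `0`, the sign `(−1)^{k+1−i}`
becomes `(−1) ^ (k − i)`. -/
theorem statement4_general (p n k : ℕ) (hn : 1 ≤ n)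
    (hk : k ≤ n - 1) (t : Fin (k + 1) → ℕ) (ht : StrictMono t)
    (htn : ∀ i, t i ≤ n - 1)
    (f : Fin (n - k) → ℕ) (hf : StrictMono f)
    (hfim : Finset.image f Finset.univ =
      Finset.range (n + 1) \ Finset.image t Finset.univ)
    (g : Fin (k + 1) → Fin (n - k) → ℕ) (hg : ∀ i, StrictMono (g i))
    (hgim : ∀ i : Fin (k + 1), Finset.image (g i) Finset.univ =
      Finset.range n \ Finset.image (fun j : Fin k => t (i.succAbove j)) Finset.univ) :
    algebraMap (MvPolynomial (Fin n) (ZMod p)) (ExtAlg p n) (Lpoly p n n) *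
        muiBracket p n k f =
      ∑ i : Fin (k + 1),
        (-1 : ExtAlg p n) ^ (k - (i : ℕ)) * muiBracket p n k (g i) *
          algebraMap (MvPolynomial (Fin n) (ZMod p)) (ExtAlg p n) (Lpoly p n (t i)) := by
  simp only [← map_one (algebraMap (MvPolynomial (Fin n) (ZMod p)) (ExtAlg p n)), ← map_neg,
    ← map_pow]
  refine algebraMap_mul_muiBracket _ _ _ _ _ _ fun κ =>
    bracket_mul_Lpoly_eq_sum (by omega) (by omega) ht (fun i => ?_) hf hfim hg hgim κ
  have := htn i
  omega

/-- The identity from the proof of Theorem 1.3, cleared of denominators.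
For `0 ≤ k ≤ n−1` and `0 ≤ t_1 < … < t_{k+1} ≤ n−1`, with `f_1 < … < f_{n−k}` the
increasing enumeration of `{0,…,n} ∖ {t_1,…,t_{k+1}}` and, for each `i`,
`g^{(i)}_1 < … < g^{(i)}_{n−k}` the increasing enumeration of
`{0,…,n−1} ∖ {t_1,…,t̂_i,…,t_{k+1}}` (so that `M_{n,t_1,…,t̂_i,…,t_{k+1}}` is the Mùi
bracket `[k; g^{(i)}]`), one has
`L_n · [k; f_1,…,f_{n−k}] = Σ_{i=1}^{k+1} (−1)^{k+1−i} · M_{n,t_1,…,t̂_i,…,t_{k+1}} · L_{n,t_i}`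
in the exterior algebra `A`.  (With `i` running over `Fin (k+1)`, the exponent
`k+1−i` of the 1-based indexing becomes `k − i`.) -/
theorem statement4 (p n k : ℕ) (hp : p.Prime) (hodd : Odd p) (hn : 1 ≤ n)
    (hk : k ≤ n - 1) (t : Fin (k + 1) → ℕ) (ht : StrictMono t)
    (htn : ∀ i, t i ≤ n - 1)
    (f : Fin (n - k) → ℕ) (hf : StrictMono f)
    (hfim : Finset.image f Finset.univ =
      Finset.range (n + 1) \ Finset.image t Finset.univ)
    (g : Fin (k + 1) → Fin (n - k) → ℕ) (hg : ∀ i, StrictMono (g i))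
    (hgim : ∀ i : Fin (k + 1), Finset.image (g i) Finset.univ =
      Finset.range n \ Finset.image (fun j : Fin k => t (i.succAbove j)) Finset.univ) :
    algebraMap (MvPolynomial (Fin n) (ZMod p)) (ExtAlg p n) (Lpoly p n n) *
        muiBracket p n k f =
      ∑ i : Fin (k + 1),
        (-1 : ExtAlg p n) ^ (k - (i : ℕ)) * muiBracket p n k (g i) *
          algebraMap (MvPolynomial (Fin n) (ZMod p)) (ExtAlg p n) (Lpoly p n (t i)) :=
  statement4_general p n k hn hk t ht htn f hf hfim g hg hgim
end
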